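/- Let (X, Γ, Φ) be a minimal equicontinuous Cantor action. Then for every x ∈ X there exists an adapted neighborhood basis at x: a chain of clopen subsets { U_ℓ ⊂ X : ℓ ≥ 0 } with U₀ = X, each U_ℓ adapted to the action, x ∈ U_{ℓ+1} ⊊ U_ℓ a proper inclusion for all ℓ ≥ 0, and ⋂_{ℓ>0} U_ℓ = {x}. -/

import Mathlib

noncomputable section

open Set Topology

/-! ### The group of homeomorphisms -/

namespace Homeomorph

variable {X : Type*} [TopologicalSpace X]

instance instGroup' : Group (X ≃ₜ X) where
  mul f g := g.trans f
  one := Homeomorph.refl X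
  inv := Homeomorph.symm
  mul_assoc f g h := rfl
  one_mul f := rfl
  mul_one f := rfl
  inv_mul_cancel f := Homeomorph.ext fun x => f.symm_apply_apply x

@[simp] theorem mul_apply' (f g : X ≃ₜ X) (x : X) : (f * g) x = f (g x) := rfl
@[simp] theorem one_apply' (x : X) : (1 : X ≃ₜ X) x = x := rfl
@[simp] theorem inv_eq_symm (f : X ≃ₜ X) : f⁻¹ = f.symm := rfl

/-- The uniform topology (topology of uniform convergence, equivalently for a compact
metric space the compact-open topology) on the group of homeomorphisms of a compact
metric space, as the metric topology of the sup-metric. -/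
instance instMetricSpaceHomeomorph {Y : Type*} [MetricSpace Y] [CompactSpace Y] :
    MetricSpace (Y ≃ₜ Y) :=
  MetricSpace.induced (fun h => (⟨h, h.continuous⟩ : C(Y, Y)))
    (fun f g hfg => Homeomorph.ext fun x => congrFun (congrArg ContinuousMap.toFun hfg) x)
    inferInstance

end Homeomorph

namespace Homeomorph

variable {Y : Type*} [MetricSpace Y] [CompactSpace Y]

theorem dist_eq_contMap (f g : Y ≃ₜ Y) :
    dist f g = dist (⟨f, f.continuous⟩ : C(Y, Y)) (⟨g, g.continuous⟩ : C(Y, Y)) := rfl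

theorem dist_apply_le (f g : Y ≃ₜ Y) (x : Y) : dist (f x) (g x) ≤ dist f g :=
  ContinuousMap.dist_apply_le_dist (f := (⟨f, f.continuous⟩ : C(Y, Y)))
    (g := (⟨g, g.continuous⟩ : C(Y, Y))) x

theorem dist_lt_iff' (f g : Y ≃ₜ Y) {C : ℝ} (hC : 0 < C) :
    dist f g < C ↔ ∀ x : Y, dist (f x) (g x) < C := by
  rw [dist_eq_contMap, ContinuousMap.dist_lt_iff hC]
  rfl

instance : IsTopologicalGroup (Y ≃ₜ Y) where
  continuous_mul := by
    rw [Metric.continuous_iff]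
    rintro ⟨f₀, g₀⟩ ε hε
    obtain ⟨δ₁, hδ₁, H₁⟩ := Metric.uniformContinuous_iff.mp
      (CompactSpace.uniformContinuous_of_continuous f₀.continuous) (ε / 2) (by positivity)
    refine ⟨min δ₁ (ε / 2), by positivity, ?_⟩
    rintro ⟨f, g⟩ hd
    have hdf : dist f f₀ < ε / 2 := by
      have h' : dist f f₀ ≤ dist ((f, g)) ((f₀, g₀)) := by
        rw [Prod.dist_eq]; exact le_max_left _ _
      exact (h'.trans_lt hd).trans_le (min_le_right _ _)
    have hdg : dist g g₀ < δ₁ := by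
      have h' : dist g g₀ ≤ dist ((f, g)) ((f₀, g₀)) := by
        rw [Prod.dist_eq]; exact le_max_right _ _
      exact (h'.trans_lt hd).trans_le (min_le_left _ _)
    rw [dist_lt_iff' _ _ hε]
    intro x
    have h1 : dist (f (g x)) (f₀ (g x)) < ε / 2 :=
      lt_of_le_of_lt (dist_apply_le f f₀ (g x)) hdf
    have h2 : dist (f₀ (g x)) (f₀ (g₀ x)) < ε / 2 :=
      H₁ (lt_of_le_of_lt (dist_apply_le g g₀ x) hdg)
    calc dist ((f * g) x) ((f₀ * g₀) x) ≤ dist (f (g x)) (f₀ (g x)) + dist (f₀ (g x)) (f₀ (g₀ x)) :=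
          dist_triangle _ _ _
      _ < ε / 2 + ε / 2 := by exact add_lt_add h1 h2
      _ = ε := by ring
  continuous_inv := by
    rw [Metric.continuous_iff]
    intro f₀ ε hε
    obtain ⟨δ, hδ, H⟩ := Metric.uniformContinuous_iff.mp
      (CompactSpace.uniformContinuous_of_continuous f₀.symm.continuous) ε hε
    refine ⟨δ, hδ, ?_⟩
    intro g hdg
    rw [dist_lt_iff' _ _ hε]
    intro y
    have key : dist (g (g.symm y)) (f₀ (g.symm y)) < δ :=
      lt_of_le_of_lt (dist_apply_le g f₀ (g.symm y)) hdg
    have h2 := H key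
    have h3 : dist (f₀.symm (g (g.symm y))) (f₀.symm (f₀ (g.symm y))) < ε := h2
    rw [Homeomorph.apply_symm_apply, Homeomorph.symm_apply_apply] at h3
    rw [dist_comm] at h3
    simpa using h3
end Homeomorph

/-! ### Steinitz (supernatural) numbers -/

/-- A Steinitz number: a formal product of primes with exponents in `ℕ∞`. -/
def SteinitzNum : Type := Nat.Primes → ℕ∞

namespace SteinitzNum

/-- The Steinitz number associated to a natural number. -/
def ofNat (n : ℕ) : SteinitzNum := fun p => (n.factorization (p : ℕ) : ℕ∞)

/-- Multiplication of Steinitz numbers adds the exponents at each prime. -/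
instance : Mul SteinitzNum := ⟨fun a b p => a p + b p⟩

/-- The least common multiple of a collection of positive integers, as a Steinitz number:
its exponent at `p` is the supremum of the `p`-adic valuations of the elements. -/
def lcmSet (S : Set ℕ) : SteinitzNum := fun p => ⨆ n ∈ S, (n.factorization (p : ℕ) : ℕ∞)

/-- Two Steinitz numbers are asymptotically equivalent if they agree after multiplication
by positive integers. -/
def AsympEquiv (a b : SteinitzNum) : Prop :=
  ∃ n₀ m₀ : ℕ, 0 < n₀ ∧ 0 < m₀ ∧ ofNat n₀ * a = ofNat m₀ * b

/-- The prime spectrum of a Steinitz number: primes with nonzero exponent. -/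
def primeSpectrum (a : SteinitzNum) : Set Nat.Primes := { p | a p ≠ 0 }

/-- The finite prime spectrum: primes with finite nonzero exponent. -/
def finitePrimeSpectrum (a : SteinitzNum) : Set Nat.Primes := { p | a p ≠ 0 ∧ a p ≠ ⊤ }

/-- The infinite prime spectrum: primes with infinite exponent. -/
def infinitePrimeSpectrum (a : SteinitzNum) : Set Nat.Primes := { p | a p = ⊤ }

end SteinitzNum

/-! ### Steinitz orders for topological groups -/

/-- The Steinitz order of a topological group: the LCM of the orders of the finite
quotients `G/N` over open normal subgroups `N ⊆ G`. -/
def steinitzOrder (G : Type*) [Group G] [TopologicalSpace G] : SteinitzNum :=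
  SteinitzNum.lcmSet
    { n | ∃ N : Subgroup G, N.Normal ∧ IsOpen (N : Set G) ∧ n = Nat.card (G ⧸ N) }

/-- The Steinitz order of a subgroup `D` of a topological group `G`: the LCM of the
cardinalities `|D/(N ∩ D)|` over open normal subgroups `N ⊆ G`. -/
def steinitzOrderOfSubgroup {G : Type*} [Group G] [TopologicalSpace G] (D : Subgroup G) :
    SteinitzNum :=
  SteinitzNum.lcmSet
    { n | ∃ N : Subgroup G, N.Normal ∧ IsOpen (N : Set G) ∧
        n = Nat.card (↥D ⧸ (N.subgroupOf D)) }

/-- The relative Steinitz order of a subgroup `D` of a topological group `G`: the LCM of the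
cardinalities `|G/(N · D)|` over open normal subgroups `N ⊆ G`. -/
def steinitzRelativeOrder {G : Type*} [Group G] [TopologicalSpace G] (D : Subgroup G) :
    SteinitzNum :=
  SteinitzNum.lcmSet
    { n | ∃ N : Subgroup G, N.Normal ∧ IsOpen (N : Set G) ∧ n = Nat.card (G ⧸ (N ⊔ D)) }

/-- A profinite (compact Hausdorff totally disconnected) topological group is topologically
Noetherian if every increasing chain of closed subgroups has a maximal element. -/
def TopologicallyNoetherian (G : Type*) [Group G] [TopologicalSpace G] : Prop :=
  ∀ c : ℕ → Subgroup G, (∀ i, IsClosed (c i : Set G)) → Monotone c → ∃ i₀, ∀ i, c i ≤ c i₀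

/-! ### Cantor actions -/

section CantorActions

variable {X : Type*} [MetricSpace X] {Γ : Type*} [Group Γ]

/-- An action is minimal if every orbit is dense. -/
def IsMinimalAction (Φ : Γ →* (X ≃ₜ X)) : Prop :=
  ∀ x : X, Dense (Set.range fun g : Γ => Φ g x)

/-- An action is equicontinuous if it satisfies the uniform `ε`-`δ` condition with respect
to the metric. -/
def IsEquicontinuousAction (Φ : Γ →* (X ≃ₜ X)) : Prop :=
  ∀ ε : ℝ, 0 < ε → ∃ δ : ℝ, 0 < δ ∧
    ∀ x y : X, dist x y < δ → ∀ g : Γ, dist (Φ g x) (Φ g y) < ε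

variable [CompactSpace X]

/-- `G(Φ)`: the closure of the image of `Γ` in `Homeo(X)`, in the uniform topology. -/
def profiniteClosure (Φ : Γ →* (X ≃ₜ X)) : Subgroup (X ≃ₜ X) :=
  Φ.range.topologicalClosure

/-- The discriminant group: the isotropy subgroup of `G(Φ)` at `x`. -/
def discriminant (Φ : Γ →* (X ≃ₜ X)) (x : X) : Subgroup (profiniteClosure Φ) where
  carrier := { h | (h : X ≃ₜ X) x = x }
  one_mem' := rfl
  mul_mem' := by
    intro a b ha hb
    simp only [Set.mem_setOf_eq] at *
    show ((a : X ≃ₜ X) * (b : X ≃ₜ X)) x = x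
    rw [Homeomorph.mul_apply', hb, ha]
  inv_mem' := by
    intro a ha
    simp only [Set.mem_setOf_eq] at *
    show ((a : X ≃ₜ X)⁻¹) x = x
    rw [Homeomorph.inv_eq_symm]
    conv_lhs => rw [← ha]
    exact Homeomorph.symm_apply_apply _ _

/-- The Steinitz order `Π[G(Φ)]` of a Cantor action. -/
def steinitzOrderAction (Φ : Γ →* (X ≃ₜ X)) : SteinitzNum :=
  steinitzOrder ↥(profiniteClosure Φ)

/-- The Steinitz order `Π[D(Φ,x)]` of the discriminant of a Cantor action. -/
def steinitzOrderDisc (Φ : Γ →* (X ≃ₜ X)) (x : X) : SteinitzNum :=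
  steinitzOrderOfSubgroup (discriminant Φ x)

/-- The relative Steinitz order `Π[G(Φ) : D(Φ,x)]` of a Cantor action. -/
def steinitzOrderRel (Φ : Γ →* (X ≃ₜ X)) (x : X) : SteinitzNum :=
  steinitzRelativeOrder (discriminant Φ x)

end CantorActions

/-! ### Adapted sets, holonomy and return equivalence -/

section Adapted

variable {X : Type*} [MetricSpace X] {Γ : Type*} [Group Γ]

/-- A nonempty clopen subset `U ⊆ X` is adapted to the action `Φ` if every group element
either fixes `U` or moves it entirely off of itself. -/
def IsAdaptedSet (Φ : Γ →* (X ≃ₜ X)) (U : Set X) : Prop :=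
  U.Nonempty ∧ IsClopen U ∧ ∀ g : Γ, ((Φ g) '' U ∩ U).Nonempty → (Φ g) '' U = U

/-- The stabilizer subgroup `Γ_U` of an adapted set. -/
def adaptedStabilizer (Φ : Γ →* (X ≃ₜ X)) (U : Set X) : Subgroup Γ where
  carrier := { g | (Φ g) '' U = U }
  one_mem' := by
    change (⇑(Φ 1)) '' U = U
    rw [map_one]
    exact Set.image_id U
  mul_mem' := by
    intro a b ha hb
    simp only [Set.mem_setOf_eq] at *
    rw [map_mul]
    show ((Φ a) * (Φ b)) '' U = U
    have : (((Φ a) * (Φ b) : X ≃ₜ X) : X → X) = (Φ a) ∘ (Φ b) := rfl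
    rw [this, Set.image_comp, hb, ha]
  inv_mem' := by
    intro a ha
    simp only [Set.mem_setOf_eq] at *
    rw [map_inv, Homeomorph.inv_eq_symm]
    conv_lhs => rw [← ha]
    rw [← Set.image_comp]
    simp

/-- The homeomorphism of an invariant set induced by a homeomorphism of `X`. -/
def restrictHomeo (h : X ≃ₜ X) {U : Set X} (hU : h '' U = U) : U ≃ₜ U :=
  (h.image U).trans (Homeomorph.setCongr hU)

@[simp] theorem restrictHomeo_coe (h : X ≃ₜ X) {U : Set X} (hU : h '' U = U) (x : U) :
    (restrictHomeo h hU x : X) = h x := rfl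

/-- The holonomy homomorphism of an adapted set: restriction of the stabilizer to `U`. -/
def holonomyHom (Φ : Γ →* (X ≃ₜ X)) (U : Set X) :
    adaptedStabilizer Φ U →* (↥U ≃ₜ ↥U) where
  toFun g := restrictHomeo (Φ (g : Γ)) g.2
  map_one' := by
    ext x
    show ((restrictHomeo (Φ ((1 : adaptedStabilizer Φ U) : Γ)) _ x : X) = _)
    simp
  map_mul' := by
    intro a b
    ext x
    show ((restrictHomeo (Φ ((a * b : adaptedStabilizer Φ U) : Γ)) _ x : X) = _)
    simp only [restrictHomeo_coe, Subgroup.coe_mul, map_mul]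
    rfl

/-- The holonomy group `H_U` of an adapted set: the image of the stabilizer in `Homeo(U)`. -/
def holonomyGroup (Φ : Γ →* (X ≃ₜ X)) (U : Set X) : Subgroup (↥U ≃ₜ ↥U) :=
  (holonomyHom Φ U).range

end Adapted

/-- Two Cantor actions are return equivalent if they admit adapted sets whose holonomy
actions are isomorphic, via a homeomorphism between the adapted sets together with a
compatible isomorphism of the holonomy groups. -/
def ReturnEquivalent
    {X₁ : Type*} [MetricSpace X₁] {Γ₁ : Type*} [Group Γ₁]
    {X₂ : Type*} [MetricSpace X₂] {Γ₂ : Type*} [Group Γ₂]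
    (Φ₁ : Γ₁ →* (X₁ ≃ₜ X₁)) (Φ₂ : Γ₂ →* (X₂ ≃ₜ X₂)) : Prop :=
  ∃ (U₁ : Set X₁) (U₂ : Set X₂), IsAdaptedSet Φ₁ U₁ ∧ IsAdaptedSet Φ₂ U₂ ∧
    ∃ (h : ↥U₁ ≃ₜ ↥U₂) (θ : holonomyGroup Φ₁ U₁ ≃* holonomyGroup Φ₂ U₂),
      ∀ k : holonomyGroup Φ₁ U₁,
        ((θ k : ↥U₂ ≃ₜ ↥U₂)) = h.symm.trans (((k : ↥U₁ ≃ₜ ↥U₁)).trans h)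

section Regularity

variable {X : Type*} [MetricSpace X]

/-- An action of a group `H` on `X` through a homomorphism `ρ : H →* Homeo(X)` is locally
quasi-analytic if there is `ε > 0` so that for every nonempty open `U` of diameter less
than `ε`, any element acting as the identity on a nonempty open subset `V ⊆ U` with
`ρ g (V) = V` acts as the identity on all of `U`. -/
def IsLocallyQuasiAnalytic {H : Type*} [Group H] (ρ : H →* (X ≃ₜ X)) : Prop :=
  ∃ ε : ℝ, 0 < ε ∧ ∀ U : Set X, IsOpen U → U.Nonempty → Metric.diam U < ε →
    ∀ V : Set X, V ⊆ U → IsOpen V → V.Nonempty →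
      ∀ g : H, (ρ g) '' V = V → (∀ x ∈ V, ρ g x = x) → ∀ x ∈ U, ρ g x = x

variable [CompactSpace X] {Γ : Type*} [Group Γ]

/-- A Cantor action is stable if the induced action of `G(Φ)` on `X` is locally
quasi-analytic; otherwise it is wild. -/
def IsStableAction (Φ : Γ →* (X ≃ₜ X)) : Prop :=
  IsLocallyQuasiAnalytic (profiniteClosure Φ).subtype

/-- An action is topologically free if the set of points fixed by some nontrivial group
element is meagre. -/
def IsTopologicallyFree (Φ : Γ →* (X ≃ₜ X)) : Prop :=
  IsMeagre { x : X | ∃ g : Γ, g ≠ 1 ∧ Φ g x = x }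

end Regularity

/-! For a clopen `V ∋ x`, the itinerary of a point `y` is the set of `g` with `Φ g y ∈ V`. The
itinerary of `Φ h y` is the right translate by `h` of that of `y`, so the action permutes the fibers
of the itinerary map, and two fibers are equal or disjoint. Equicontinuity makes the itinerary
locally constant, so its fibers are clopen: the fiber of `x` is an adapted set inside `V`.
Perfectness leaves room to shrink strictly at every step, and shrinking into the balls of radius
`1 / (n + 1)` cuts the intersection down to `{x}`. -/

section Itinerary

variable {X : Type*} [TopologicalSpace X] {Γ : Type*} [Group Γ] (Φ : Γ →* (X ≃ₜ X)) (V : Set X)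

def itinerary (y : X) : Set Γ :=
  {g | Φ g y ∈ V}

theorem itinerary_apply (h : Γ) (y : X) :
    itinerary Φ V (Φ h y) = (· * h) ⁻¹' itinerary Φ V y := by
  ext g
  simp [itinerary]

theorem itinerary_apply_eq_iff (h : Γ) (y z : X) :
    itinerary Φ V (Φ h y) = itinerary Φ V (Φ h z) ↔ itinerary Φ V y = itinerary Φ V z := by
  simp only [itinerary_apply]
  exact (Set.preimage_injective.mpr (Group.mulRight_bijective h).surjective).eq_iff

theorem image_itinerary_fiber (h : Γ) (x : X) :
    Φ h '' {y | itinerary Φ V y = itinerary Φ V x} =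
      {y | itinerary Φ V y = itinerary Φ V (Φ h x)} := by
  ext z
  rw [(Φ h).image_eq_preimage_symm]
  change itinerary Φ V ((Φ h).symm z) = _ ↔ _
  rw [← itinerary_apply_eq_iff Φ V h, Homeomorph.apply_symm_apply]
  rfl

theorem itinerary_fiber_subset {x : X} (hx : x ∈ V) :
    {y | itinerary Φ V y = itinerary Φ V x} ⊆ V := by
  intro y hy
  have h1 : (1 : Γ) ∈ itinerary Φ V y := by
    rw [hy]
    simpa [itinerary] using hx
  simpa [itinerary] using h1

end Itinerary

section AdaptedNeighborhoods

variable {X : Type*} [MetricSpace X] {Γ : Type*} [Group Γ] (Φ : Γ →* (X ≃ₜ X))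

theorem isAdaptedSet_itinerary_fiber {V : Set X} (hV : IsLocallyConstant (itinerary Φ V))
    (x : X) : IsAdaptedSet Φ {y | itinerary Φ V y = itinerary Φ V x} := by
  refine ⟨⟨x, rfl⟩, hV.isClopen_fiber _, fun g hg => ?_⟩
  rw [image_itinerary_fiber] at hg ⊢
  obtain ⟨z, hzg, hz⟩ := hg
  rw [← hzg, hz]

theorem isLocallyConstant_itinerary [CompactSpace X] (heqc : IsEquicontinuousAction Φ)
    {V : Set X} (hV : IsClopen V) : IsLocallyConstant (itinerary Φ V) := by
  obtain ⟨ε, hε, hthick⟩ :=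
    hV.isClosed.isCompact.exists_thickening_subset_open hV.isOpen subset_rfl
  have mem_of_near {a b : X} (ha : a ∈ V) (hab : dist b a < ε) : b ∈ V :=
    hthick (Metric.mem_thickening_iff.mpr ⟨a, ha, hab⟩)
  obtain ⟨δ, hδ, hclose⟩ := heqc ε hε
  rw [IsLocallyConstant.iff_eventually_eq]
  intro y
  filter_upwards [Metric.ball_mem_nhds y hδ] with z hz
  ext g
  have hd : dist (Φ g z) (Φ g y) < ε := hclose z y hz g
  exact ⟨fun h => mem_of_near h (dist_comm (Φ g z) _ ▸ hd), fun h => mem_of_near h hd⟩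

theorem isAdaptedSet_univ [Nonempty X] : IsAdaptedSet Φ (univ : Set X) :=
  ⟨univ_nonempty, isClopen_univ, fun g _ => image_univ_of_surjective (Φ g).surjective⟩

variable [CompactSpace X] [TotallyDisconnectedSpace X]

theorem exists_isAdaptedSet_subset_of_mem_nhds (heqc : IsEquicontinuousAction Φ) {x : X}
    {N : Set X} (hN : N ∈ 𝓝 x) : ∃ A, IsAdaptedSet Φ A ∧ x ∈ A ∧ A ⊆ N := by
  obtain ⟨V, ⟨hxV, hV⟩, hVN⟩ := (nhds_basis_clopen x).mem_iff.mp hN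
  exact ⟨_, isAdaptedSet_itinerary_fiber Φ (isLocallyConstant_itinerary Φ heqc hV) x, rfl,
    (itinerary_fiber_subset Φ V hxV).trans hVN⟩

theorem exists_isAdaptedSet_ssubset_subset_ball [PerfectSpace X]
    (heqc : IsEquicontinuousAction Φ) {x : X} {W : Set X} (hW : IsAdaptedSet Φ W) (hx : x ∈ W)
    {r : ℝ} (hr : 0 < r) : ∃ A, IsAdaptedSet Φ A ∧ x ∈ A ∧ A ⊂ W ∧ A ⊆ Metric.ball x r := by
  obtain ⟨y, ⟨hyW, -⟩, hyx⟩ :=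
    preperfect_iff_nhds.mp PerfectSpace.univ_preperfect x trivial W (hW.2.1.isOpen.mem_nhds hx)
  have hN : W ∩ Metric.ball x r ∩ {y}ᶜ ∈ 𝓝 x :=
    Filter.inter_mem (Filter.inter_mem (hW.2.1.isOpen.mem_nhds hx) (Metric.ball_mem_nhds x hr))
      (compl_singleton_mem_nhds hyx.symm)
  obtain ⟨A, hA, hxA, hAN⟩ := exists_isAdaptedSet_subset_of_mem_nhds Φ heqc hN
  refine ⟨A, hA, hxA, ?_, fun z hz => (hAN hz).1.2⟩
  exact ssubset_of_subset_not_subset (fun z hz => (hAN hz).1.1)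
    fun hWA => (hAN (hWA hyW)).2 rfl

end AdaptedNeighborhoods

theorem exists_adapted_neighborhood_basis_general
    {X : Type*} [MetricSpace X] [CompactSpace X] [TotallyDisconnectedSpace X]
    (hperf : Perfect (Set.univ : Set X))
    {Γ : Type*} [Group Γ] (Φ : Γ →* (X ≃ₜ X))
    (heqc : IsEquicontinuousAction Φ) (x : X) :
    ∃ U : ℕ → Set X, U 0 = Set.univ ∧ (∀ ℓ, IsAdaptedSet Φ (U ℓ)) ∧
      (∀ ℓ, x ∈ U (ℓ + 1)) ∧ (∀ ℓ, U (ℓ + 1) ⊂ U ℓ) ∧ (⋂ ℓ, U ℓ) = {x} := by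
  have : Nonempty X := ⟨x⟩
  have : PerfectSpace X := ⟨hperf.acc⟩
  let S := {W : Set X // IsAdaptedSet Φ W ∧ x ∈ W}
  have step (n : ℕ) (W : S) : ∃ W' : S, W'.1 ⊂ W.1 ∧ W'.1 ⊆ Metric.ball x (1 / (n + 1)) := by
    obtain ⟨A, hA, hxA, hAW, hAball⟩ :=
      exists_isAdaptedSet_ssubset_subset_ball Φ heqc W.2.1 W.2.2 Nat.one_div_pos_of_nat
    exact ⟨⟨A, hA, hxA⟩, hAW, hAball⟩
  choose next hnext_ssubset hnext_ball using step
  let U : ℕ → S := fun n => Nat.rec ⟨univ, isAdaptedSet_univ Φ, mem_univ x⟩ next n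
  refine ⟨fun n => (U n).1, rfl, fun n => (U n).2.1, fun n => (U (n + 1)).2.2,
    fun n => hnext_ssubset n (U n), ?_⟩
  refine subset_antisymm (fun z hz => ?_)
    (singleton_subset_iff.2 (mem_iInter.2 fun n => (U n).2.2))
  refine eq_of_forall_dist_le fun ε hε => ?_
  obtain ⟨n, hn⟩ := exists_nat_one_div_lt hε
  exact (hnext_ball n (U n) (mem_iInter.1 hz (n + 1))).le.trans hn.le

/-- Every point of a minimal equicontinuous Cantor action admits an
adapted neighborhood basis. -/
theorem exists_adapted_neighborhood_basis
    {X : Type*} [MetricSpace X] [CompactSpace X] [Nonempty X] [TotallyDisconnectedSpace X]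
    (hperf : Perfect (Set.univ : Set X))
    {Γ : Type*} [Group Γ] [Countable Γ] (Φ : Γ →* (X ≃ₜ X))
    (hmin : IsMinimalAction Φ) (heqc : IsEquicontinuousAction Φ) (x : X) :
    ∃ U : ℕ → Set X, U 0 = Set.univ ∧ (∀ ℓ, IsAdaptedSet Φ (U ℓ)) ∧
      (∀ ℓ, x ∈ U (ℓ + 1)) ∧ (∀ ℓ, U (ℓ + 1) ⊂ U ℓ) ∧ (⋂ ℓ, U ℓ) = {x} :=
  exists_adapted_neighborhood_basis_general hperf Φ heqc x
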